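/- (Corollary: sufficient condition implies PE-1.) Let (M, d) be a compact metric space, K : M × M → ℝ a continuous strictly positive definite kernel, x_1, …, x_n ∈ M pairwise distinct, and x : [0, ∞) → M uniformly continuous. Let ε, θ > 0 satisfy conditions (i)–(iii) of the context. Suppose there exist T₂ ≥ 0, Δ₂ > 0 and τ₀ > 0 such that for every t ≥ T₂ and each i = 1, …, n, μ({ s ∈ [t, t+Δ₂] : d(x_i, x(s)) ≤ ε }) ≥ τ₀. Then there exist constants T₁, γ₁, δ₁, Δ₁ > 0 such that the finite-dimensional PE-1 condition holds. -/

import Mathlib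

open MeasureTheory Matrix Set

/-- Euclidean norm of a vector in `ℝ^m`. -/
noncomputable def eNorm {m : ℕ} (v : Fin m → ℝ) : ℝ := Real.sqrt (∑ i, v i ^ 2)

/-- The kernel combination `g_α(y) = Σ_i α_i K(x_i, y)`. -/
def gcomb {M : Type*} {n : ℕ} (K : M → M → ℝ) (xc : Fin n → M) (α : Fin n → ℝ) (y : M) : ℝ :=
  ∑ i, α i * K (xc i) y

/-- The matrix `S(y_1,…,y_n)` with entries `S_{ij} = K(x_j, y_i)`. -/
def Smat {M : Type*} {n : ℕ} (K : M → M → ℝ) (xc : Fin n → M) (y : Fin n → M) :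
    Matrix (Fin n) (Fin n) ℝ :=
  Matrix.of fun i j => K (xc j) (y i)

/-- The Gram matrix `G_{ij} = K(x_i, x_j)` of the kernel centers. -/
def Gram {M : Type*} {n : ℕ} (K : M → M → ℝ) (xc : Fin n → M) : Matrix (Fin n) (Fin n) ℝ :=
  Matrix.of fun i j => K (xc i) (xc j)

/-- A kernel is strictly positive definite: symmetric, and the Gram matrix of any finite
collection of pairwise distinct points is positive definite. -/
def StrictlyPD {M : Type*} (K : M → M → ℝ) : Prop :=
  (∀ y z, K y z = K z y) ∧
  ∀ (m : ℕ) (y : Fin m → M), Function.Injective y →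
    (Matrix.of fun i j => K (y i) (y j)).PosDef

/-- The finite-dimensional PE-1 condition with constants `T₁, γ₁, δ₁, Δ₁`. -/
def PE1 {M : Type*} {n : ℕ} (K : M → M → ℝ) (xc : Fin n → M) (x : ℝ → M)
    (T₁ γ₁ δ₁ Δ₁ : ℝ) : Prop :=
  ∀ t ≥ T₁, ∀ α : Fin n → ℝ, ∃ s ∈ Set.Icc t (t + Δ₁),
    γ₁ * Real.sqrt (α ⬝ᵥ (Gram K xc) *ᵥ α) ≤
      |∫ τ in Set.Icc s (s + δ₁), gcomb K xc α (x τ)|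

/-!
At a time `s_i` where the trajectory is `ε`-close to the center `x_i`, condition (i) applied to
`y_i = x(s_i)` gives `‖(g_α(x(s_i)))_i‖ ≥ θ‖α‖`, so some coordinate satisfies
`|g_α(x(s_i))| ≥ θ‖α‖/√n`; the visiting hypothesis provides such times in every window. The family
`g_α ∘ x`, normalised by `‖α‖`, is uniformly equicontinuous, so `|g_α ∘ x|` stays above half that
bound on an interval of fixed length `δ₁` after `s_i`, where `g_α ∘ x` keeps its sign. Since
`√(αᵀGα) ≤ C‖α‖`, this bounds the integral over `[s_i, s_i + δ₁]` below by a multiple of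
`√(αᵀGα)`.
-/

lemma eNorm_nonneg {m : ℕ} (v : Fin m → ℝ) : 0 ≤ eNorm v := Real.sqrt_nonneg _

lemma abs_le_eNorm {m : ℕ} (v : Fin m → ℝ) (i : Fin m) : |v i| ≤ eNorm v := by
  rw [← Real.sqrt_sq_eq_abs]
  exact Real.sqrt_le_sqrt (Finset.single_le_sum (f := fun j => v j ^ 2)
    (fun j _ => sq_nonneg _) (Finset.mem_univ i))

lemma exists_eNorm_le_sqrt_mul_abs {m : ℕ} (hm : 0 < m) (v : Fin m → ℝ) :
    ∃ i, eNorm v ≤ Real.sqrt m * |v i| := by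
  obtain ⟨i, -, hi⟩ := Finset.univ.exists_max_image (fun j => |v j|)
    ⟨⟨0, hm⟩, Finset.mem_univ _⟩
  refine ⟨i, ?_⟩
  calc eNorm v ≤ Real.sqrt (∑ _j : Fin m, v i ^ 2) :=
        Real.sqrt_le_sqrt (Finset.sum_le_sum fun j _ => sq_le_sq.mpr (hi j (Finset.mem_univ j)))
    _ = Real.sqrt m * |v i| := by
        simp [Real.sqrt_mul (Nat.cast_nonneg m), Real.sqrt_sq_eq_abs]

lemma sqrt_dotProduct_mulVec_le {m : ℕ} (A : Matrix (Fin m) (Fin m) ℝ) (α : Fin m → ℝ) :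
    Real.sqrt (α ⬝ᵥ A *ᵥ α) ≤ Real.sqrt (∑ i, ∑ j, |A i j|) * eNorm α := by
  have hquad : α ⬝ᵥ A *ᵥ α ≤ (∑ i, ∑ j, |A i j|) * eNorm α ^ 2 := by
    calc α ⬝ᵥ A *ᵥ α = ∑ i, ∑ j, α i * A i j * α j := by
          simp [dotProduct, mulVec, Finset.mul_sum, mul_assoc]
      _ ≤ ∑ i, ∑ j, |A i j| * eNorm α ^ 2 := by
          refine Finset.sum_le_sum fun i _ => Finset.sum_le_sum fun j _ => ?_
          calc α i * A i j * α j ≤ |A i j| * (|α i| * |α j|) := by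
                rw [mul_comm |A i j|, ← abs_mul, ← abs_mul, mul_right_comm]
                exact le_abs_self _
            _ ≤ |A i j| * (eNorm α * eNorm α) := by
                have := eNorm_nonneg α
                gcongr <;> exact abs_le_eNorm α _
            _ = |A i j| * eNorm α ^ 2 := by ring
      _ = (∑ i, ∑ j, |A i j|) * eNorm α ^ 2 := by simp [Finset.sum_mul]
  calc Real.sqrt (α ⬝ᵥ A *ᵥ α) ≤ Real.sqrt ((∑ i, ∑ j, |A i j|) * eNorm α ^ 2) :=
        Real.sqrt_le_sqrt hquad
    _ = Real.sqrt (∑ i, ∑ j, |A i j|) * eNorm α := by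
        rw [Real.sqrt_mul (by positivity), Real.sqrt_sq (eNorm_nonneg α)]

lemma le_abs_setIntegral_Icc {f : ℝ → ℝ} {a δ c : ℝ} (hδ : 0 ≤ δ)
    (hf : IntegrableOn f (Icc a (a + δ))) (hdev : ∀ τ ∈ Icc a (a + δ), |f τ - f a| ≤ c) :
    (|f a| - c) * δ ≤ |∫ τ in Icc a (a + δ), f τ| := by
  have hvol : volume.real (Icc a (a + δ)) = δ := by
    rw [Real.volume_real_Icc_of_le (by linarith)]; ring
  have hsub : ∫ τ in Icc a (a + δ), (f τ - f a) = (∫ τ in Icc a (a + δ), f τ) - δ * f a := by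
    rw [integral_sub hf (integrableOn_const (by simp)), setIntegral_const, hvol, smul_eq_mul]
  have hclose : |(∫ τ in Icc a (a + δ), f τ) - δ * f a| ≤ c * δ := by
    have h := norm_setIntegral_le_of_norm_le_const (μ := volume) (f := fun τ => f τ - f a)
      measure_Icc_lt_top hdev
    rwa [hvol, hsub] at h
  have hfa : |δ * f a| = δ * |f a| := by rw [abs_mul, abs_of_nonneg hδ]
  linarith [abs_sub_abs_le_abs_sub (δ * f a) (∫ τ in Icc a (a + δ), f τ),
    abs_sub_comm (δ * f a) (∫ τ in Icc a (a + δ), f τ)]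

section Kernel

variable {M : Type*} {n : ℕ} {K : M → M → ℝ}

lemma Smat_mulVec (xc y : Fin n → M) (α : Fin n → ℝ) :
    Smat K xc y *ᵥ α = fun i => gcomb K xc α (y i) := by
  ext i
  simp [Smat, mulVec, dotProduct, gcomb, mul_comm]

lemma exists_le_abs_gcomb (hn : 0 < n) {xc y : Fin n → M} {θ : ℝ} {α : Fin n → ℝ}
    (hS : θ * eNorm α ≤ eNorm (Smat K xc y *ᵥ α)) :
    ∃ i, θ / Real.sqrt n * eNorm α ≤ |gcomb K xc α (y i)| := by
  obtain ⟨i, hi⟩ := exists_eNorm_le_sqrt_mul_abs hn (Smat K xc y *ᵥ α)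
  refine ⟨i, ?_⟩
  rw [Smat_mulVec] at hS hi
  rw [div_mul_eq_mul_div, div_le_iff₀' (Real.sqrt_pos.mpr (Nat.cast_pos.mpr hn))]
  exact hS.trans hi

lemma continuous_gcomb [TopologicalSpace M] (hK : Continuous fun p : M × M => K p.1 p.2)
    (xc : Fin n → M) (α : Fin n → ℝ) : Continuous (gcomb K xc α) :=
  continuous_finsetSum _ fun _ _ =>
    continuous_const.mul (hK.comp (continuous_const.prodMk continuous_id))

variable [PseudoMetricSpace M]

lemma exists_abs_gcomb_sub_le (hK : UniformContinuous fun p : M × M => K p.1 p.2)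
    (xc : Fin n → M) {η : ℝ} (hη : 0 < η) :
    ∃ δ > 0, ∀ y z, dist y z < δ → ∀ α,
      |gcomb K xc α y - gcomb K xc α z| ≤ η * eNorm α := by
  obtain ⟨δ, hδ, hKδ⟩ := Metric.uniformContinuous_iff.mp hK (η / (n + 1)) (by positivity)
  refine ⟨δ, hδ, fun y z hyz α => ?_⟩
  have hterm : ∀ j, |α j * K (xc j) y - α j * K (xc j) z| ≤ eNorm α * (η / (n + 1)) := by
    intro j
    have hd : dist (xc j, y) (xc j, z) < δ := by simpa [Prod.dist_eq] using hyz
    rw [← mul_sub, abs_mul]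
    exact mul_le_mul (abs_le_eNorm α j) (hKδ hd).le (abs_nonneg _) (eNorm_nonneg α)
  have hfrac : (n : ℝ) / (n + 1) ≤ 1 := div_le_one_of_le₀ (by linarith) (by positivity)
  calc |gcomb K xc α y - gcomb K xc α z|
      = |∑ j, (α j * K (xc j) y - α j * K (xc j) z)| := by
        simp [gcomb, Finset.sum_sub_distrib]
    _ ≤ ∑ j, |α j * K (xc j) y - α j * K (xc j) z| := Finset.abs_sum_le_sum_abs _ _
    _ ≤ ∑ _j : Fin n, eNorm α * (η / (n + 1)) := Finset.sum_le_sum fun j _ => hterm j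
    _ = (n / (n + 1)) * (η * eNorm α) := by simp; ring
    _ ≤ η * eNorm α := mul_le_of_le_one_left (by positivity [eNorm_nonneg α]) hfrac

lemma exists_abs_gcomb_comp_sub_le (hK : UniformContinuous fun p : M × M => K p.1 p.2)
    (xc : Fin n → M) {x : ℝ → M} (hx : UniformContinuousOn x (Ici 0)) {η : ℝ} (hη : 0 < η) :
    ∃ δ > 0, ∀ α, ∀ s ≥ 0, ∀ τ ∈ Icc s (s + δ),
      |gcomb K xc α (x τ) - gcomb K xc α (x s)| ≤ η * eNorm α := by
  obtain ⟨δK, hδK, hgδ⟩ := exists_abs_gcomb_sub_le hK xc hη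
  obtain ⟨δx, hδx, hxδ⟩ := Metric.uniformContinuousOn_iff.mp hx δK hδK
  refine ⟨δx / 2, half_pos hδx, fun α s hs τ hτ => hgδ _ _ (hxδ τ ?_ s hs ?_) α⟩
  · exact hs.trans hτ.1
  · rw [Real.dist_eq, abs_of_nonneg (by linarith [hτ.1])]
    linarith [hτ.2]

end Kernel

lemma PE1_of_fin_zero {M : Type*} (K : M → M → ℝ) (xc : Fin 0 → M) (x : ℝ → M)
    {T γ δ Δ : ℝ} (hΔ : 0 ≤ Δ) : PE1 K xc x T γ δ Δ :=
  fun t _ α => ⟨t, ⟨le_rfl, by linarith⟩, by simp⟩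

lemma PE1_of_forall_exists_le_abs_gcomb {M : Type*} [TopologicalSpace M] {n : ℕ}
    {K : M → M → ℝ} (hK : Continuous fun p : M × M => K p.1 p.2) (xc : Fin n → M)
    {x : ℝ → M} (hx : ContinuousOn x (Ici 0)) {T a δ Δ : ℝ} (hT : 0 ≤ T) (ha : 0 ≤ a)
    (hδ : 0 < δ)
    (hdev : ∀ α, ∀ s ≥ 0, ∀ τ ∈ Icc s (s + δ),
      |gcomb K xc α (x τ) - gcomb K xc α (x s)| ≤ a / 2 * eNorm α)
    (hlow : ∀ t ≥ T, ∀ α, ∃ s ∈ Icc t (t + Δ), a * eNorm α ≤ |gcomb K xc α (x s)|) :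
    PE1 K xc x T (a * δ / (2 * (Real.sqrt (∑ i, ∑ j, |Gram K xc i j|) + 1))) δ Δ := by
  intro t ht α
  obtain ⟨s, hs, hgs⟩ := hlow t ht α
  have hs0 : 0 ≤ s := by linarith [hs.1]
  refine ⟨s, hs, ?_⟩
  set C := Real.sqrt (∑ i, ∑ j, |Gram K xc i j|)
  have hC : 0 ≤ C := Real.sqrt_nonneg _
  have hint : IntegrableOn (fun τ => gcomb K xc α (x τ)) (Icc s (s + δ)) :=
    ((continuous_gcomb hK xc α).comp_continuousOn
      (hx.mono fun τ hτ => hs0.trans hτ.1)).integrableOn_Icc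
  calc a * δ / (2 * (C + 1)) * Real.sqrt (α ⬝ᵥ Gram K xc *ᵥ α)
      ≤ a * δ / (2 * (C + 1)) * ((C + 1) * eNorm α) := by
        gcongr
        linarith [sqrt_dotProduct_mulVec_le (Gram K xc) α, eNorm_nonneg α]
    _ = (a * eNorm α - a / 2 * eNorm α) * δ := by field_simp; ring
    _ ≤ (|gcomb K xc α (x s)| - a / 2 * eNorm α) * δ := by gcongr
    _ ≤ |∫ τ in Icc s (s + δ), gcomb K xc α (x τ)| :=
        le_abs_setIntegral_Icc hδ.le hint (hdev α s hs0)

theorem stmt8_general {M : Type*} [MetricSpace M] [CompactSpace M] {n : ℕ}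
    (K : M → M → ℝ) (hKcont : Continuous fun p : M × M => K p.1 p.2)
    (xc : Fin n → M)
    (x : ℝ → M) (hx : UniformContinuousOn x (Set.Ici 0))
    (ε θ : ℝ) (hθ : 0 < θ)
    -- (i) the lower bound on `S(y_1,…,y_n)` for perturbed centers
    (hSbound : ∀ y : Fin n → M, (∀ i, dist (xc i) (y i) ≤ ε) →
      ∀ α : Fin n → ℝ, θ * eNorm α ≤ eNorm ((Smat K xc y) *ᵥ α))
    (T₂ Δ₂ τ₀ : ℝ) (hΔ₂ : 0 < Δ₂) (hτ₀ : 0 < τ₀)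
    -- in every window `[t, t+Δ₂]` the trajectory spends time at least `τ₀`
    -- within distance `ε` of each center
    (hvisit : ∀ t ≥ T₂, ∀ i,
      ENNReal.ofReal τ₀ ≤ volume {s ∈ Set.Icc t (t + Δ₂) | dist (xc i) (x s) ≤ ε}) :
    ∃ T₁ > 0, ∃ γ₁ > 0, ∃ δ₁ > 0, ∃ Δ₁ > 0, PE1 K xc x T₁ γ₁ δ₁ Δ₁ := by
  rcases n.eq_zero_or_pos with rfl | hn
  · exact ⟨1, one_pos, 1, one_pos, 1, one_pos, Δ₂, hΔ₂, PE1_of_fin_zero K xc x hΔ₂.le⟩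
  have ha : 0 < θ / Real.sqrt n := by positivity
  obtain ⟨δ, hδ, hdev⟩ := exists_abs_gcomb_comp_sub_le
    (CompactSpace.uniformContinuous_of_continuous hKcont) xc hx (half_pos ha)
  have hlow : ∀ t ≥ max T₂ 1, ∀ α, ∃ s ∈ Icc t (t + Δ₂),
      θ / Real.sqrt n * eNorm α ≤ |gcomb K xc α (x s)| := by
    intro t ht α
    have hvisits : ∀ i, ∃ s ∈ Icc t (t + Δ₂), dist (xc i) (x s) ≤ ε := fun i =>
      nonempty_of_measure_ne_zero ((ENNReal.ofReal_pos.mpr hτ₀).trans_le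
        (hvisit t (le_of_max_le_left ht) i)).ne'
    choose s hs hdist using hvisits
    obtain ⟨i, hi⟩ := exists_le_abs_gcomb hn (hSbound (x ∘ s) hdist α)
    exact ⟨s i, hs i, hi⟩
  exact ⟨max T₂ 1, by positivity, _, by positivity, δ, hδ, Δ₂, hΔ₂,
    PE1_of_forall_exists_le_abs_gcomb hKcont xc hx.continuousOn (by positivity) ha.le hδ
      hdev hlow⟩

theorem stmt8 {M : Type*} [MetricSpace M] [CompactSpace M] {n : ℕ}
    (K : M → M → ℝ) (hKcont : Continuous fun p : M × M => K p.1 p.2)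
    (hKspd : StrictlyPD K)
    (xc : Fin n → M) (hxc : Function.Injective xc)
    (x : ℝ → M) (hx : UniformContinuousOn x (Set.Ici 0))
    (ε θ : ℝ) (hε : 0 < ε) (hθ : 0 < θ)
    -- (i) the lower bound on `S(y_1,…,y_n)` for perturbed centers
    (hSbound : ∀ y : Fin n → M, (∀ i, dist (xc i) (y i) ≤ ε) →
      ∀ α : Fin n → ℝ, θ * eNorm α ≤ eNorm ((Smat K xc y) *ᵥ α))
    -- (ii) `ε` is less than half the minimal pairwise distance between the centers
    (hsep : ∀ i j, i ≠ j → ε < (1 / 2) * dist (xc i) (xc j))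
    -- (iii) the closed balls of radius `ε` about the centers are compact and connected
    (hball : ∀ i, IsCompact (Metric.closedBall (xc i) ε) ∧
      IsConnected (Metric.closedBall (xc i) ε))
    (T₂ Δ₂ τ₀ : ℝ) (hT₂ : 0 ≤ T₂) (hΔ₂ : 0 < Δ₂) (hτ₀ : 0 < τ₀)
    -- in every window `[t, t+Δ₂]` the trajectory spends time at least `τ₀`
    -- within distance `ε` of each center
    (hvisit : ∀ t ≥ T₂, ∀ i,
      ENNReal.ofReal τ₀ ≤ volume {s ∈ Set.Icc t (t + Δ₂) | dist (xc i) (x s) ≤ ε}) :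
    ∃ T₁ > 0, ∃ γ₁ > 0, ∃ δ₁ > 0, ∃ Δ₁ > 0, PE1 K xc x T₁ γ₁ δ₁ Δ₁ :=
  stmt8_general K hKcont xc x hx ε θ hθ hSbound T₂ Δ₂ τ₀ hΔ₂ hτ₀ hvisit
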